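/- arXiv:2410.01186 — 6 statements merged into one kernel-verified Lean document; each statement's English description precedes it below -/
import Mathlib

section
/- Let S = {(x_i, y_i)}_{i=1}^n be a finite indexed family of labeled samples partitioned into a clean subset S_C and a dirty subset S_D with |S_D| ≤ ξ n for some ξ ≥ 0, and let q ∈ [0, 1]^n satisfy sup_{‖w‖₂ ≤ 1} (1/n) Σ_{i=1}^n q_i (w·x_i)² ≤ σ̄² for some σ̄ > 0. Then the linear sum norm of the dirty samples satisfies ‖q∘S_D‖_Σ ≤ σ̄ · √ξ · n. -/
open scoped RealInnerProductSpace

/-- If `|SD| ≤ ξ n` and the reweighted empirical variance satisfies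
`sup_{‖w‖ ≤ 1} (1/n) ∑ i q i (w · x i)² ≤ σ̄²`, then the linear sum norm of the dirty samples
satisfies `‖q ∘ S_D‖_Σ ≤ σ̄ √ξ n`. -/
theorem stmt_2 {d n : ℕ} (x : Fin n → EuclideanSpace ℝ (Fin d)) (y : Fin n → ℝ)
    (hy : ∀ i, y i = 1 ∨ y i = -1)
    (SC SD : Finset (Fin n)) (hdisj : Disjoint SC SD) (hpart : SC ∪ SD = Finset.univ)
    (ξ : ℝ) (hξ : 0 ≤ ξ) (hSD : (SD.card : ℝ) ≤ ξ * n)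
    (q : Fin n → ℝ) (hq : ∀ i, q i ∈ Set.Icc (0 : ℝ) 1)
    (σ : ℝ) (hσ : 0 < σ)
    (hvar : (⨆ (w : {w : EuclideanSpace ℝ (Fin d) // ‖w‖ ≤ 1}),
        (1 / (n : ℝ)) * ∑ i, q i * ⟪(w : EuclideanSpace ℝ (Fin d)), x i⟫ ^ 2) ≤ σ ^ 2) :
    (⨆ (a : Fin n → Set.Icc (-1 : ℝ) 1), ‖∑ i ∈ SD, ((a i : ℝ) * q i) • x i‖)
      ≤ σ * Real.sqrt ξ * n := by
  have hrhs : (0:ℝ) ≤ σ * Real.sqrt ξ * n := by positivity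
  refine Real.iSup_le (fun a => ?_) hrhs
  set v : EuclideanSpace ℝ (Fin d) := ∑ i ∈ SD, ((a i : ℝ) * q i) • x i with hv
  rcases eq_or_ne v 0 with h0 | h0
  · simpa [h0] using hrhs
  rcases Nat.eq_zero_or_pos n with hn | hn
  · exfalso; apply h0; subst hn
    have : SD = ∅ := Finset.eq_empty_of_isEmpty SD
    simp [hv, this]
  have hnpos : (0:ℝ) < n := by exact_mod_cast hn
  set w : EuclideanSpace ℝ (Fin d) := ‖v‖⁻¹ • v with hw
  have hvpos : (0:ℝ) < ‖v‖ := norm_pos_iff.2 h0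
  have hwnorm : ‖w‖ ≤ 1 := by
    rw [hw, norm_smul, norm_inv, norm_norm, inv_mul_cancel₀ hvpos.ne']
  -- the variance bound applied to w
  have hbdd : BddAbove (Set.range fun w : {w : EuclideanSpace ℝ (Fin d) // ‖w‖ ≤ 1} =>
      (1 / (n : ℝ)) * ∑ i, q i * ⟪(w : EuclideanSpace ℝ (Fin d)), x i⟫ ^ 2) := by
    refine ⟨(1 / (n : ℝ)) * ∑ i, ‖x i‖ ^ 2, ?_⟩
    rintro _ ⟨u, rfl⟩
    have key : ∀ i, q i * ⟪(u : EuclideanSpace ℝ (Fin d)), x i⟫ ^ 2 ≤ ‖x i‖ ^ 2 := by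
      intro i
      have h1 : |⟪(u : EuclideanSpace ℝ (Fin d)), x i⟫| ≤ ‖(u : EuclideanSpace ℝ (Fin d))‖ * ‖x i‖ :=
        abs_real_inner_le_norm _ _
      have h2 := u.2
      have h4 := (hq i).2
      have h5 : |⟪(u : EuclideanSpace ℝ (Fin d)), x i⟫| ≤ ‖x i‖ :=
        h1.trans (by nlinarith [norm_nonneg (x i)])
      have h6 : ⟪(u : EuclideanSpace ℝ (Fin d)), x i⟫ ^ 2 ≤ ‖x i‖ ^ 2 := by
        rw [← sq_abs]; exact pow_le_pow_left₀ (abs_nonneg _) h5 2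
      calc q i * ⟪(u : EuclideanSpace ℝ (Fin d)), x i⟫ ^ 2
          ≤ 1 * ⟪(u : EuclideanSpace ℝ (Fin d)), x i⟫ ^ 2 :=
            mul_le_mul_of_nonneg_right h4 (sq_nonneg _)
        _ = ⟪(u : EuclideanSpace ℝ (Fin d)), x i⟫ ^ 2 := one_mul _
        _ ≤ ‖x i‖ ^ 2 := h6
    exact mul_le_mul_of_nonneg_left (Finset.sum_le_sum fun i _ => key i) (by positivity)
  have hkey : ∑ i, q i * ⟪w, x i⟫ ^ 2 ≤ n * σ ^ 2 := by
    have h := le_trans (le_ciSup hbdd (⟨w, hwnorm⟩ :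
      {w : EuclideanSpace ℝ (Fin d) // ‖w‖ ≤ 1})) hvar
    rw [div_mul_eq_mul_div, one_mul, div_le_iff₀ hnpos] at h
    linarith
  -- ‖v‖ = ⟪w, v⟫
  have hwv : ‖v‖ = ⟪w, v⟫ := by
    rw [hw, real_inner_smul_left, real_inner_self_eq_norm_sq]
    field_simp
  have hexp : ⟪w, v⟫ = ∑ i ∈ SD, ((a i : ℝ) * q i) * ⟪w, x i⟫ := by
    rw [hv, inner_sum]
    exact Finset.sum_congr rfl fun i _ => real_inner_smul_right _ _ _
  have hstep1 : ∑ i ∈ SD, ((a i : ℝ) * q i) * ⟪w, x i⟫ ≤ ∑ i ∈ SD, q i * |⟪w, x i⟫| := by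
    refine Finset.sum_le_sum fun i _ => ?_
    have ha1 : |(a i : ℝ)| ≤ 1 := abs_le.2 ⟨(a i).2.1, (a i).2.2⟩
    have hq0 := (hq i).1
    calc ((a i : ℝ) * q i) * ⟪w, x i⟫ ≤ |((a i : ℝ) * q i) * ⟪w, x i⟫| := le_abs_self _
      _ = |(a i : ℝ)| * (q i * |⟪w, x i⟫|) := by
          rw [abs_mul, abs_mul, abs_of_nonneg hq0]; ring
      _ ≤ 1 * (q i * |⟪w, x i⟫|) := by
          apply mul_le_mul_of_nonneg_right ha1; positivity
      _ = q i * |⟪w, x i⟫| := one_mul _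
  have hCS : ∑ i ∈ SD, q i * |⟪w, x i⟫| ≤
      Real.sqrt (SD.card) * Real.sqrt (∑ i ∈ SD, (q i * |⟪w, x i⟫|) ^ 2) := by
    have := Real.sum_mul_le_sqrt_mul_sqrt SD (fun _ => (1:ℝ)) (fun i => q i * |⟪w, x i⟫|)
    simpa using this
  have hstep2 : ∑ i ∈ SD, (q i * |⟪w, x i⟫|) ^ 2 ≤ ∑ i, q i * ⟪w, x i⟫ ^ 2 := by
    calc ∑ i ∈ SD, (q i * |⟪w, x i⟫|) ^ 2 ≤ ∑ i ∈ SD, q i * ⟪w, x i⟫ ^ 2 := by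
          refine Finset.sum_le_sum fun i _ => ?_
          have h1 := (hq i).1; have h2 := (hq i).2
          have h3 : (q i * |⟪w, x i⟫|) ^ 2 = q i ^ 2 * ⟪w, x i⟫ ^ 2 := by
            rw [mul_pow, sq_abs]
          rw [h3]
          exact mul_le_mul_of_nonneg_right (by nlinarith) (sq_nonneg _)
      _ ≤ ∑ i, q i * ⟪w, x i⟫ ^ 2 :=
          Finset.sum_le_sum_of_subset_of_nonneg (Finset.subset_univ SD)
            (fun i _ _ => by have := (hq i).1; positivity)
  have hfin : ‖v‖ ≤ Real.sqrt (ξ * n) * Real.sqrt ((n:ℝ) * σ ^ 2) := by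
    rw [hwv, hexp]
    refine le_trans hstep1 (hCS.trans ?_)
    exact mul_le_mul (Real.sqrt_le_sqrt hSD) (Real.sqrt_le_sqrt (hstep2.trans hkey))
      (Real.sqrt_nonneg _) (Real.sqrt_nonneg _)
  have heq : Real.sqrt (ξ * n) * Real.sqrt ((n:ℝ) * σ ^ 2) = σ * Real.sqrt ξ * n := by
    have hss : Real.sqrt (n:ℝ) * Real.sqrt (n:ℝ) = (n:ℝ) := Real.mul_self_sqrt hnpos.le
    rw [Real.sqrt_mul hξ, Real.sqrt_mul hnpos.le, Real.sqrt_sq hσ.le]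
    linear_combination (Real.sqrt ξ * σ) * hss
  exact hfin.trans_eq heq
end

section
/- Let S = {(x_i, y_i)}_{i=1}^n be a finite indexed family of labeled samples partitioned into a clean subset S_C and a dirty subset S_D, and suppose there is a unit vector w* ∈ ℝ^d and γ > 0 with y_i (w*·x_i) ≥ γ for every i ∈ S_C. Let q ∈ [0, 1]^n, let v̂ ∈ ℝ^d be nonzero with ‖v̂‖₂ ≤ 1/γ, set ŵ := v̂/‖v̂‖₂, let 0 < τ ≤ γ/2, and let (x, y) be a labeled sample with y (ŵ·x) ≤ 0. Let a ∈ ℝ^n be any vector such that for every i: a_i ∈ [-1, 0], a_i = −1 whenever y_i (v̂·x_i) < 1, and a_i = 0 whenever y_i (v̂·x_i) > 1 (i.e. the vector g = Σ_i a_i q_i y_i x_i is an element of the subdifferential of the reweighted hinge loss at v̂). Then Σ_{i=1}^n a_i q_i y_i (x_i·w*) ≤ −γ Σ_{i ∈ S_C, (x_i, y_i) ∈ P_ŵ^τ(x, y)} q_i + ‖q∘S_D‖_Σ. -/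
open scoped RealInnerProductSpace

/-- Lemma: gradient bound in the direction of `w*`: under the margin condition on
clean samples, for any misclassified sample `(x₀, y₀)` and any subgradient coefficient vector `a`
of the reweighted hinge loss at `v̂`, the gradient in the direction `w*` is bounded by
`-γ ∑_{i ∈ S_C ∩ P} q i + ‖q ∘ S_D‖_Σ`. -/
theorem stmt_5 {d n : ℕ} (x : Fin n → EuclideanSpace ℝ (Fin d)) (y : Fin n → ℝ)
    (hy : ∀ i, y i = 1 ∨ y i = -1)
    (SC SD : Finset (Fin n)) (hdisj : Disjoint SC SD) (hpart : SC ∪ SD = Finset.univ)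
    (wstar : EuclideanSpace ℝ (Fin d)) (hwstar : ‖wstar‖ = 1)
    (γ : ℝ) (hγ : 0 < γ) (hmargin : ∀ i ∈ SC, γ ≤ y i * ⟪wstar, x i⟫)
    (q : Fin n → ℝ) (hq : ∀ i, q i ∈ Set.Icc (0 : ℝ) 1)
    (v : EuclideanSpace ℝ (Fin d)) (hv0 : v ≠ 0) (hvnorm : ‖v‖ ≤ 1 / γ)
    (τ : ℝ) (hτ0 : 0 < τ) (hτ : τ ≤ γ / 2)
    (x0 : EuclideanSpace ℝ (Fin d)) (y0 : ℝ) (hy0 : y0 = 1 ∨ y0 = -1)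
    (hmis : y0 * ⟪‖v‖⁻¹ • v, x0⟫ ≤ 0)
    (a : Fin n → ℝ) (ha : ∀ i, a i ∈ Set.Icc (-1 : ℝ) 0)
    (haneg : ∀ i, y i * ⟪v, x i⟫ < 1 → a i = -1)
    (hazero : ∀ i, 1 < y i * ⟪v, x i⟫ → a i = 0) :
    (∑ i, a i * q i * (y i * ⟪x i, wstar⟫))
      ≤ -γ * (∑ i ∈ SC.filter (fun i =>
              |y i * ⟪‖v‖⁻¹ • v, x i⟫ - y0 * ⟪‖v‖⁻¹ • v, x0⟫| ≤ τ), q i)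
        + ⨆ (b : Fin n → Set.Icc (-1 : ℝ) 1), ‖∑ i ∈ SD, ((b i : ℝ) * q i) • x i‖ := by
  classical
  have hvpos : (0:ℝ) < ‖v‖ := norm_pos_iff.mpr hv0
  -- pancake membership forces a i = -1
  have key : ∀ i, |y i * ⟪‖v‖⁻¹ • v, x i⟫ - y0 * ⟪‖v‖⁻¹ • v, x0⟫| ≤ τ → a i = -1 := by
    intro i hi
    apply haneg
    have h1 : y i * ⟪‖v‖⁻¹ • v, x i⟫ ≤ τ := by
      have := (abs_le.mp hi).2
      linarith
    have h2 : ⟪((‖v‖⁻¹ : ℝ) • v : EuclideanSpace ℝ (Fin d)), x i⟫ = ‖v‖⁻¹ * ⟪v, x i⟫ :=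
      real_inner_smul_left _ _ _
    have h3 : y i * ⟪v, x i⟫ = ‖v‖ * (y i * ⟪((‖v‖⁻¹ : ℝ) • v : EuclideanSpace ℝ (Fin d)), x i⟫) := by
      rw [h2]; field_simp
    rw [h3]
    have h4 : ‖v‖ * (y i * ⟪((‖v‖⁻¹ : ℝ) • v : EuclideanSpace ℝ (Fin d)), x i⟫) ≤ ‖v‖ * τ :=
      mul_le_mul_of_nonneg_left h1 hvpos.le
    have h5 : ‖v‖ * τ ≤ (1/γ) * (γ/2) :=
      mul_le_mul hvnorm hτ hτ0.le (by positivity)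
    have h6 : (1/γ) * (γ/2) = 1/2 := by field_simp
    linarith
  have hsplit : (∑ i, a i * q i * (y i * ⟪x i, wstar⟫))
      = (∑ i ∈ SC, a i * q i * (y i * ⟪x i, wstar⟫))
        + ∑ i ∈ SD, a i * q i * (y i * ⟪x i, wstar⟫) := by
    rw [← Finset.sum_union hdisj, hpart]
  rw [hsplit]
  have hSC : (∑ i ∈ SC, a i * q i * (y i * ⟪x i, wstar⟫))
      ≤ -γ * (∑ i ∈ SC.filter (fun i =>
              |y i * ⟪‖v‖⁻¹ • v, x i⟫ - y0 * ⟪‖v‖⁻¹ • v, x0⟫| ≤ τ), q i) := by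
    have step : (∑ i ∈ SC, a i * q i * (y i * ⟪x i, wstar⟫))
        ≤ ∑ i ∈ SC, (if |y i * ⟪‖v‖⁻¹ • v, x i⟫ - y0 * ⟪‖v‖⁻¹ • v, x0⟫| ≤ τ
            then -γ * q i else 0) := by
      apply Finset.sum_le_sum
      intro i hi
      have hm : γ ≤ y i * ⟪wstar, x i⟫ := hmargin i hi
      have hm' : y i * ⟪x i, wstar⟫ = y i * ⟪wstar, x i⟫ := by rw [real_inner_comm]
      have hq1 := (hq i).1
      split_ifs with hp
      · rw [key i hp, hm']
        nlinarith
      · have ha2 := (ha i).2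
        rw [hm']
        nlinarith [mul_nonneg hq1 (hγ.le.trans hm)]
    calc (∑ i ∈ SC, a i * q i * (y i * ⟪x i, wstar⟫))
        ≤ _ := step
      _ = ∑ i ∈ SC.filter (fun i =>
              |y i * ⟪‖v‖⁻¹ • v, x i⟫ - y0 * ⟪‖v‖⁻¹ • v, x0⟫| ≤ τ), -γ * q i := by
          rw [Finset.sum_filter]
      _ = -γ * _ := by rw [Finset.mul_sum]
  have hb : ∀ i, a i * y i ∈ Set.Icc (-1:ℝ) 1 := by
    intro i
    rcases hy i with h | h <;> rcases ha i with ⟨h1, h2⟩ <;> rw [h] <;>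
      constructor <;> nlinarith
  set b : Fin n → Set.Icc (-1:ℝ) 1 := fun i => ⟨a i * y i, hb i⟩ with hbdef
  have hbdd : BddAbove (Set.range fun c : Fin n → Set.Icc (-1:ℝ) 1 =>
      ‖∑ i ∈ SD, ((c i : ℝ) * q i) • x i‖) := by
    refine ⟨∑ i ∈ SD, ‖x i‖, ?_⟩
    rintro r ⟨c, rfl⟩
    calc ‖∑ i ∈ SD, ((c i : ℝ) * q i) • x i‖
        ≤ ∑ i ∈ SD, ‖((c i : ℝ) * q i) • x i‖ := norm_sum_le _ _
      _ ≤ ∑ i ∈ SD, ‖x i‖ := by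
          apply Finset.sum_le_sum
          intro i _
          rw [norm_smul]
          have hc1 := (c i).2.1
          have hc2 := (c i).2.2
          have hq1 := (hq i).1
          have hq2 := (hq i).2
          have habs : |(c i : ℝ) * q i| ≤ 1 := by
            rw [abs_mul]
            have : |(c i : ℝ)| ≤ 1 := abs_le.mpr ⟨hc1, hc2⟩
            have : |q i| ≤ 1 := abs_le.mpr ⟨by linarith, hq2⟩
            nlinarith [abs_nonneg (c i : ℝ), abs_nonneg (q i), abs_le.mpr (⟨hc1, hc2⟩ : -1 ≤ (c i:ℝ) ∧ (c i:ℝ) ≤ 1)]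
          calc |(c i : ℝ) * q i| * ‖x i‖ ≤ 1 * ‖x i‖ :=
                mul_le_mul_of_nonneg_right habs (norm_nonneg _)
            _ = ‖x i‖ := one_mul _
  have hSD : (∑ i ∈ SD, a i * q i * (y i * ⟪x i, wstar⟫))
      ≤ ⨆ (c : Fin n → Set.Icc (-1 : ℝ) 1), ‖∑ i ∈ SD, ((c i : ℝ) * q i) • x i‖ := by
    have heq : (∑ i ∈ SD, a i * q i * (y i * ⟪x i, wstar⟫))
        = ⟪(∑ i ∈ SD, ((b i : ℝ) * q i) • x i : EuclideanSpace ℝ (Fin d)), wstar⟫ := by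
      rw [sum_inner]
      apply Finset.sum_congr rfl
      intro i _
      rw [real_inner_smul_left]
      simp only [hbdef]
      ring
    rw [heq]
    calc ⟪(∑ i ∈ SD, ((b i : ℝ) * q i) • x i : EuclideanSpace ℝ (Fin d)), wstar⟫
        ≤ ‖(∑ i ∈ SD, ((b i : ℝ) * q i) • x i : EuclideanSpace ℝ (Fin d))‖ * ‖wstar‖ :=
          real_inner_le_norm _ _
      _ = ‖(∑ i ∈ SD, ((b i : ℝ) * q i) • x i : EuclideanSpace ℝ (Fin d))‖ := by
          rw [hwstar, mul_one]
      _ ≤ _ := le_ciSup hbdd b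
  exact add_le_add hSC hSD
end

section
/- Let S = {(x_i, y_i)}_{i=1}^n be a finite indexed family of labeled samples partitioned into a clean subset S_C and a dirty subset S_D, and suppose there is a unit vector w* ∈ ℝ^d and γ > 0 with y_i (w*·x_i) ≥ γ for every i ∈ S_C. Let q ∈ [0, 1]^n, let v̂ ∈ ℝ^d with ‖v̂‖₂ = 1/γ, set ŵ := v̂/‖v̂‖₂, and assume α := ŵ·w* ∈ (0, 1); let w' := (w* − α ŵ)/‖w* − α ŵ‖₂. Let 0 < τ ≤ γ/2 and let (x, y) be a labeled sample with y (ŵ·x) ≤ 0. Let a ∈ ℝ^n be any vector such that for every i: a_i ∈ [-1, 0], a_i = −1 whenever y_i (v̂·x_i) < 1, and a_i = 0 whenever y_i (v̂·x_i) > 1 (i.e. the vector g = Σ_i a_i q_i y_i x_i is an element of the subdifferential of the reweighted hinge loss at v̂). Then Σ_{i=1}^n a_i q_i y_i (x_i·w') ≤ −(γ/2) Σ_{i ∈ S_C, (x_i, y_i) ∈ P_ŵ^τ(x, y)} q_i + ‖q∘S_D‖_Σ. -/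
/-!
Write `t = y ⟪ŵ, x⟫` for the margin of a sample along `ŵ`. Since
`w' ∝ w* - α ŵ` with `‖w* - α ŵ‖ = √(1 - α²) ≤ 1`, a clean sample with `t ≤ c ≤ γ` satisfies
`y ⟪x, w'⟫ ≥ y ⟪w*, x⟫ - α t ≥ γ - c`. A clean sample with a nonzero subgradient coefficient has
`t ≤ γ`, so it contributes with a nonpositive sign; a clean sample in the pancake of a
misclassified point has `t ≤ τ ≤ γ/2`, so its coefficient is `-1` and it contributes at most
`-(γ/2) q_i`. The dirty samples contribute `⟪∑ aᵢ yᵢ qᵢ xᵢ, w'⟫ ≤ ‖q ∘ S_D‖_Σ`.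
-/

open scoped RealInnerProductSpace

open Finset

section Geometry

variable {E : Type*} [NormedAddCommGroup E] [InnerProductSpace ℝ E]

/-- The paper's `w'`: the normalized component of `w` orthogonal to the unit vector `u`. -/
noncomputable def unitPerp (u w : E) : E :=
  ‖w - ⟪u, w⟫ • u‖⁻¹ • (w - ⟪u, w⟫ • u)

lemma norm_unitPerp_le_one (u w : E) : ‖unitPerp u w‖ ≤ 1 := by
  rw [unitPerp, norm_smul, norm_inv, norm_norm]
  exact inv_mul_le_one

lemma inner_unitPerp (u w z : E) :
    ⟪z, unitPerp u w⟫ = ‖w - ⟪u, w⟫ • u‖⁻¹ * (⟪w, z⟫ - ⟪u, w⟫ * ⟪u, z⟫) := by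
  rw [unitPerp, real_inner_smul_right, inner_sub_right, real_inner_smul_right,
    real_inner_comm w z, real_inner_comm u z]

lemma norm_sub_inner_smul_sq {u : E} (hu : ‖u‖ = 1) (w : E) :
    ‖w - ⟪u, w⟫ • u‖ ^ 2 = ‖w‖ ^ 2 - ⟪u, w⟫ ^ 2 := by
  rw [norm_sub_sq_real, real_inner_smul_right, norm_smul, hu, real_inner_comm, Real.norm_eq_abs]
  ring_nf
  rw [sq_abs]
  ring

lemma norm_sub_inner_smul_mem_Ioc {u w : E} (hu : ‖u‖ = 1) (hw : ‖w‖ = 1)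
    (hα : |⟪u, w⟫| < 1) : ‖w - ⟪u, w⟫ • u‖ ∈ Set.Ioc 0 1 := by
  have hsq := norm_sub_inner_smul_sq hu w
  rw [hw, one_pow] at hsq
  have hα_sq : ⟪u, w⟫ ^ 2 < 1 := by rw [← sq_abs]; nlinarith [abs_nonneg ⟪u, w⟫]
  have hnonneg := norm_nonneg (w - ⟪u, w⟫ • u)
  constructor <;> nlinarith

lemma sub_le_mul_inner_unitPerp {u w z : E} {y γ c : ℝ} (hu : ‖u‖ = 1) (hw : ‖w‖ = 1)
    (hα : ⟪u, w⟫ ∈ Set.Ico 0 1) (hmargin : γ ≤ y * ⟪w, z⟫) (hc : c ∈ Set.Icc 0 γ)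
    (ht : y * ⟪u, z⟫ ≤ c) : γ - c ≤ y * ⟪z, unitPerp u w⟫ := by
  obtain ⟨hβ0, hβ1⟩ :=
    norm_sub_inner_smul_mem_Ioc hu hw (abs_lt.mpr ⟨by linarith [hα.1], hα.2⟩)
  have hαt : ⟪u, w⟫ * (y * ⟪u, z⟫) ≤ c :=
    (mul_le_mul_of_nonneg_left ht hα.1).trans (mul_le_of_le_one_left hc.1 hα.2.le)
  calc γ - c ≤ y * ⟪w, z⟫ - ⟪u, w⟫ * (y * ⟪u, z⟫) := by linarith
    _ ≤ ‖w - ⟪u, w⟫ • u‖⁻¹ * (y * ⟪w, z⟫ - ⟪u, w⟫ * (y * ⟪u, z⟫)) :=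
      le_mul_of_one_le_left (by linarith [hc.2]) ((one_le_inv₀ hβ0).mpr hβ1)
    _ = y * ⟪z, unitPerp u w⟫ := by rw [inner_unitPerp]; ring

end Geometry

section LinearSumNorm

variable {ι E : Type*} [NormedAddCommGroup E] [InnerProductSpace ℝ E]

/-- The linear sum norm `‖q ∘ s‖_Σ`. -/
noncomputable def linearSumNorm (q : ι → ℝ) (x : ι → E) (s : Finset ι) : ℝ :=
  ⨆ b : ι → Set.Icc (-1 : ℝ) 1, ‖∑ i ∈ s, ((b i : ℝ) * q i) • x i‖

lemma norm_sum_le_linearSumNorm (q : ι → ℝ) (x : ι → E) (s : Finset ι)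
    (b : ι → Set.Icc (-1 : ℝ) 1) :
    ‖∑ i ∈ s, ((b i : ℝ) * q i) • x i‖ ≤ linearSumNorm q x s := by
  refine le_ciSup (f := fun b : ι → Set.Icc (-1 : ℝ) 1 => ‖∑ i ∈ s, ((b i : ℝ) * q i) • x i‖)
    ⟨∑ i ∈ s, |q i| * ‖x i‖, ?_⟩ b
  rintro _ ⟨c, rfl⟩
  refine (norm_sum_le _ _).trans (sum_le_sum fun i _ => ?_)
  rw [norm_smul, Real.norm_eq_abs, abs_mul]
  gcongr
  exact mul_le_of_le_one_left (abs_nonneg _) (abs_le.mpr (c i).2)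

lemma sum_mul_inner_le_linearSumNorm (q c : ι → ℝ) (x : ι → E) (s : Finset ι)
    (hc : ∀ i, c i ∈ Set.Icc (-1 : ℝ) 1) {w : E} (hw : ‖w‖ ≤ 1) :
    ∑ i ∈ s, c i * q i * ⟪x i, w⟫ ≤ linearSumNorm q x s := by
  have hsum : ∑ i ∈ s, c i * q i * ⟪x i, w⟫ = ⟪∑ i ∈ s, (c i * q i) • x i, w⟫ := by
    simp only [sum_inner, real_inner_smul_left]
  calc ∑ i ∈ s, c i * q i * ⟪x i, w⟫
      ≤ ‖∑ i ∈ s, (c i * q i) • x i‖ * ‖w‖ := hsum ▸ real_inner_le_norm _ _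
    _ ≤ ‖∑ i ∈ s, (c i * q i) • x i‖ := mul_le_of_le_one_right (norm_nonneg _) hw
    _ ≤ linearSumNorm q x s := norm_sum_le_linearSumNorm q x s fun i => ⟨c i, hc i⟩

end LinearSumNorm

lemma Finset.sum_le_sum_filter_of_nonpos {ι : Type*} (s : Finset ι) (p : ι → Prop)
    [DecidablePred p] {f g : ι → ℝ} (hp : ∀ i ∈ s, p i → f i ≤ g i)
    (hnp : ∀ i ∈ s, ¬ p i → f i ≤ 0) : ∑ i ∈ s, f i ≤ ∑ i ∈ s with p i, g i := by
  rw [← sum_filter_add_sum_filter_not s p f]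
  have hpos : ∑ i ∈ s with p i, f i ≤ ∑ i ∈ s with p i, g i :=
    sum_le_sum fun i hi => hp i (mem_filter.mp hi).1 (mem_filter.mp hi).2
  have hneg : ∑ i ∈ s with ¬ p i, f i ≤ 0 :=
    sum_nonpos fun i hi => hnp i (mem_filter.mp hi).1 (mem_filter.mp hi).2
  linarith

theorem stmt_6_general {d n : ℕ} (x : Fin n → EuclideanSpace ℝ (Fin d)) (y : Fin n → ℝ)
    (hy : ∀ i, y i = 1 ∨ y i = -1)
    (SC SD : Finset (Fin n)) (hdisj : Disjoint SC SD) (hpart : SC ∪ SD = Finset.univ)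
    (wstar : EuclideanSpace ℝ (Fin d)) (hwstar : ‖wstar‖ = 1)
    (γ : ℝ) (hγ : 0 < γ) (hmargin : ∀ i ∈ SC, γ ≤ y i * ⟪wstar, x i⟫)
    (q : Fin n → ℝ) (hq : ∀ i, q i ∈ Set.Icc (0 : ℝ) 1)
    (v : EuclideanSpace ℝ (Fin d)) (hvnorm : ‖v‖ = 1 / γ)
    (w' : EuclideanSpace ℝ (Fin d))
    (hα : ⟪‖v‖⁻¹ • v, wstar⟫ ∈ Set.Ioo (0 : ℝ) 1)
    (hw' : w' = ‖wstar - ⟪‖v‖⁻¹ • v, wstar⟫ • (‖v‖⁻¹ • v)‖⁻¹ •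
                (wstar - ⟪‖v‖⁻¹ • v, wstar⟫ • (‖v‖⁻¹ • v)))
    (τ : ℝ) (hτ : τ ≤ γ / 2)
    (x0 : EuclideanSpace ℝ (Fin d)) (y0 : ℝ)
    (hmis : y0 * ⟪‖v‖⁻¹ • v, x0⟫ ≤ 0)
    (a : Fin n → ℝ) (ha : ∀ i, a i ∈ Set.Icc (-1 : ℝ) 0)
    (haneg : ∀ i, y i * ⟪v, x i⟫ < 1 → a i = -1)
    (hazero : ∀ i, 1 < y i * ⟪v, x i⟫ → a i = 0) :
    (∑ i, a i * q i * (y i * ⟪x i, w'⟫))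
      ≤ -(γ / 2) * (∑ i ∈ SC.filter (fun i =>
              |y i * ⟪‖v‖⁻¹ • v, x i⟫ - y0 * ⟪‖v‖⁻¹ • v, x0⟫| ≤ τ), q i)
        + ⨆ (b : Fin n → Set.Icc (-1 : ℝ) 1), ‖∑ i ∈ SD, ((b i : ℝ) * q i) • x i‖ := by
  set wh := ‖v‖⁻¹ • v
  have hw'_eq : w' = unitPerp wh wstar := hw'
  have hvinv : ‖v‖⁻¹ = γ := by rw [hvnorm, one_div, inv_inv]
  have hwh : ‖wh‖ = 1 := by
    rw [norm_smul, norm_inv, norm_norm, inv_mul_cancel₀ (by simp [hvnorm, hγ.ne'])]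
  have hmargin_wh (i : Fin n) : y i * ⟪wh, x i⟫ = γ * (y i * ⟪v, x i⟫) := by
    rw [real_inner_smul_left, hvinv]; ring
  have hmargin_perp (i : Fin n) (hi : i ∈ SC) (c : ℝ) (hc : c ∈ Set.Icc 0 γ)
      (ht : y i * ⟪wh, x i⟫ ≤ c) : γ - c ≤ y i * ⟪x i, w'⟫ :=
    hw'_eq ▸ sub_le_mul_inner_unitPerp hwh hwstar (Set.Ioo_subset_Ico_self hα)
      (hmargin i hi) hc ht
  have hclean (i : Fin n) (hi : i ∈ SC) : a i * q i * (y i * ⟪x i, w'⟫) ≤ 0 := by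
    rcases eq_or_ne (a i) 0 with h0 | h0
    · simp [h0]
    have hv : y i * ⟪v, x i⟫ ≤ 1 := not_lt.mp fun h => h0 (hazero i h)
    have hperp := hmargin_perp i hi γ ⟨hγ.le, le_rfl⟩ (by rw [hmargin_wh]; nlinarith)
    exact mul_nonpos_of_nonpos_of_nonneg
      (mul_nonpos_of_nonpos_of_nonneg (ha i).2 (hq i).1) (by linarith)
  have hpancake (i : Fin n) (hi : i ∈ SC) (hP : |y i * ⟪wh, x i⟫ - y0 * ⟪wh, x0⟫| ≤ τ) :
      a i * q i * (y i * ⟪x i, w'⟫) ≤ -(γ / 2) * q i := by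
    have ht : y i * ⟪wh, x i⟫ ≤ γ / 2 := by linarith [(abs_le.mp hP).2]
    have hai : a i = -1 := haneg i (by rw [hmargin_wh] at ht; nlinarith)
    have hperp := hmargin_perp i hi (γ / 2) ⟨by linarith, by linarith⟩ ht
    have := mul_le_mul_of_nonneg_left (by linarith : γ / 2 ≤ y i * ⟪x i, w'⟫) (hq i).1
    rw [hai]
    linarith
  have hdirty : ∑ i ∈ SD, a i * q i * (y i * ⟪x i, w'⟫) ≤ linearSumNorm q x SD := by
    have hay (i : Fin n) : a i * y i ∈ Set.Icc (-1 : ℝ) 1 := by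
      rcases hy i with h | h <;> rw [h] <;> constructor <;> linarith [(ha i).1, (ha i).2]
    calc ∑ i ∈ SD, a i * q i * (y i * ⟪x i, w'⟫) = ∑ i ∈ SD, a i * y i * q i * ⟪x i, w'⟫ :=
          sum_congr rfl fun i _ => by ring
      _ ≤ linearSumNorm q x SD :=
          sum_mul_inner_le_linearSumNorm q _ x SD hay (hw'_eq ▸ norm_unitPerp_le_one wh wstar)
  have hSC := SC.sum_le_sum_filter_of_nonpos _ hpancake fun i hi _ => hclean i hi
  rw [← mul_sum] at hSC
  rw [← hpart, sum_union hdisj]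
  exact add_le_add hSC hdirty

/-- Lemma: gradient bound in the direction `w'` orthogonal to `ŵ`: with
`‖v̂‖ = 1/γ`, `ŵ = v̂/‖v̂‖`, `α = ŵ · w* ∈ (0,1)` and
`w' = (w* − α ŵ)/‖w* − α ŵ‖`, for any misclassified sample `(x₀, y₀)` and any subgradient
coefficient vector `a` of the reweighted hinge loss at `v̂`, the gradient in the direction `w'`
is bounded by `-(γ/2) ∑_{i ∈ S_C ∩ P} q i + ‖q ∘ S_D‖_Σ`. -/
theorem stmt_6 {d n : ℕ} (x : Fin n → EuclideanSpace ℝ (Fin d)) (y : Fin n → ℝ)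
    (hy : ∀ i, y i = 1 ∨ y i = -1)
    (SC SD : Finset (Fin n)) (hdisj : Disjoint SC SD) (hpart : SC ∪ SD = Finset.univ)
    (wstar : EuclideanSpace ℝ (Fin d)) (hwstar : ‖wstar‖ = 1)
    (γ : ℝ) (hγ : 0 < γ) (hmargin : ∀ i ∈ SC, γ ≤ y i * ⟪wstar, x i⟫)
    (q : Fin n → ℝ) (hq : ∀ i, q i ∈ Set.Icc (0 : ℝ) 1)
    (v : EuclideanSpace ℝ (Fin d)) (hvnorm : ‖v‖ = 1 / γ)
    (w' : EuclideanSpace ℝ (Fin d))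
    (hα : ⟪‖v‖⁻¹ • v, wstar⟫ ∈ Set.Ioo (0 : ℝ) 1)
    (hw' : w' = ‖wstar - ⟪‖v‖⁻¹ • v, wstar⟫ • (‖v‖⁻¹ • v)‖⁻¹ •
                (wstar - ⟪‖v‖⁻¹ • v, wstar⟫ • (‖v‖⁻¹ • v)))
    (τ : ℝ) (hτ0 : 0 < τ) (hτ : τ ≤ γ / 2)
    (x0 : EuclideanSpace ℝ (Fin d)) (y0 : ℝ) (hy0 : y0 = 1 ∨ y0 = -1)
    (hmis : y0 * ⟪‖v‖⁻¹ • v, x0⟫ ≤ 0)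
    (a : Fin n → ℝ) (ha : ∀ i, a i ∈ Set.Icc (-1 : ℝ) 0)
    (haneg : ∀ i, y i * ⟪v, x i⟫ < 1 → a i = -1)
    (hazero : ∀ i, 1 < y i * ⟪v, x i⟫ → a i = 0) :
    (∑ i, a i * q i * (y i * ⟪x i, w'⟫))
      ≤ -(γ / 2) * (∑ i ∈ SC.filter (fun i =>
              |y i * ⟪‖v‖⁻¹ • v, x i⟫ - y0 * ⟪‖v‖⁻¹ • v, x0⟫| ≤ τ), q i)
        + ⨆ (b : Fin n → Set.Icc (-1 : ℝ) 1), ‖∑ i ∈ SD, ((b i : ℝ) * q i) • x i‖ :=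
  stmt_6_general x y hy SC SD hdisj hpart wstar hwstar γ hγ hmargin q hq v hvnorm w' hα hw' τ hτ x0
    y0 hmis a ha haneg hazero
end

section
/- Let S = {(x_i, y_i)}_{i=1}^n be a finite indexed family of labeled samples partitioned into a clean subset S_C and a dirty subset S_D, and suppose there is a unit vector w* ∈ ℝ^d and γ > 0 with y_i (w*·x_i) ≥ γ for every i ∈ S_C. Let η₀ > 0 and let q ∈ [0, 1]^n satisfy Σ_{i=1}^n q_i ≥ (1 − 2η₀) n, and suppose |S_D| ≤ 2η₀ n. Let v̂ be a nonzero minimizer of the reweighted hinge loss ℓ(w; q∘S) over {w : ‖w‖₂ ≤ 1/γ}, and set ŵ := v̂/‖v̂‖₂. Let (x, y) be a labeled sample and let 0 < τ ≤ γ/2 be such that the pancake P_ŵ^τ(x, y) is ρ-dense with respect to S_C for some ρ > 4η₀, and suppose (γ/4) Σ_{i ∈ S_C, (x_i, y_i) ∈ P_ŵ^τ(x, y)} q_i > ‖q∘S_D‖_Σ. Then (x, y) is not misclassified by ŵ, i.e. y (ŵ·x) > 0. -/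
open scoped RealInnerProductSpace

set_option maxHeartbeats 1000000 in
/-- pointwise guarantee: if `v̂` is a nonzero minimizer of the reweighted hinge
loss over `{w : ‖w‖ ≤ 1/γ}`, the pancake `P_ŵ^τ(x₀, y₀)` is `ρ`-dense w.r.t. `S_C` for some
`ρ > 4η₀`, and `(γ/4) ∑_{i ∈ S_C ∩ P} q i > ‖q ∘ S_D‖_Σ`, then `(x₀, y₀)` is not misclassified
by `ŵ = v̂/‖v̂‖`. -/
theorem stmt_7 {d n : ℕ} (x : Fin n → EuclideanSpace ℝ (Fin d)) (y : Fin n → ℝ)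
    (hy : ∀ i, y i = 1 ∨ y i = -1)
    (SC SD : Finset (Fin n)) (hdisj : Disjoint SC SD) (hpart : SC ∪ SD = Finset.univ)
    (wstar : EuclideanSpace ℝ (Fin d)) (hwstar : ‖wstar‖ = 1)
    (γ : ℝ) (hγ : 0 < γ) (hmargin : ∀ i ∈ SC, γ ≤ y i * ⟪wstar, x i⟫)
    (η₀ : ℝ) (hη₀ : 0 < η₀)
    (q : Fin n → ℝ) (hq : ∀ i, q i ∈ Set.Icc (0 : ℝ) 1)
    (hqsum : (1 - 2 * η₀) * n ≤ ∑ i, q i)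
    (hSD : (SD.card : ℝ) ≤ 2 * η₀ * n)
    (v : EuclideanSpace ℝ (Fin d)) (hv0 : v ≠ 0) (hvnorm : ‖v‖ ≤ 1 / γ)
    (hmin : ∀ u : EuclideanSpace ℝ (Fin d), ‖u‖ ≤ 1 / γ →
      (∑ i, q i * max 0 (1 - y i * ⟪v, x i⟫)) ≤ ∑ i, q i * max 0 (1 - y i * ⟪u, x i⟫))
    (x0 : EuclideanSpace ℝ (Fin d)) (y0 : ℝ) (hy0 : y0 = 1 ∨ y0 = -1)
    (τ : ℝ) (hτ0 : 0 < τ) (hτ : τ ≤ γ / 2)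
    (ρ : ℝ) (hρ : 4 * η₀ < ρ)
    (hdense : ρ * SC.card ≤
      ((SC.filter (fun i =>
          |y i * ⟪‖v‖⁻¹ • v, x i⟫ - y0 * ⟪‖v‖⁻¹ • v, x0⟫| ≤ τ)).card : ℝ))
    (hgrad : (⨆ (b : Fin n → Set.Icc (-1 : ℝ) 1), ‖∑ i ∈ SD, ((b i : ℝ) * q i) • x i‖)
        < (γ / 4) * ∑ i ∈ SC.filter (fun i =>
              |y i * ⟪‖v‖⁻¹ • v, x i⟫ - y0 * ⟪‖v‖⁻¹ • v, x0⟫| ≤ τ), q i) :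
    0 < y0 * ⟪‖v‖⁻¹ • v, x0⟫ := by
  classical
  by_contra hcon
  push_neg at hcon
  have hvpos : (0:ℝ) < ‖v‖ := norm_pos_iff.mpr hv0
  set w : EuclideanSpace ℝ (Fin d) := ‖v‖⁻¹ • v with hw
  set P : Finset (Fin n) :=
    SC.filter (fun i => |y i * ⟪w, x i⟫ - y0 * ⟪w, x0⟫| ≤ τ) with hPdef
  set u : EuclideanSpace ℝ (Fin d) := γ⁻¹ • wstar with hu
  have hunorm : ‖u‖ = 1 / γ := by
    rw [hu, norm_smul, hwstar, mul_one, Real.norm_eq_abs,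
      abs_of_pos (inv_pos.mpr hγ), one_div]
  have key := hmin u (le_of_eq hunorm)
  have hvw : ∀ i, y i * ⟪v, x i⟫ = ‖v‖ * (y i * ⟪w, x i⟫) := by
    intro i
    have e : ⟪w, x i⟫ = ‖v‖⁻¹ * ⟪v, x i⟫ := by
      rw [hw]; exact real_inner_smul_left _ _ _
    rw [e]
    field_simp
  -- Step A: pancake points have hinge loss ≥ 1/2 at v
  have hA : ∀ i ∈ P, (1:ℝ)/2 ≤ max 0 (1 - y i * ⟪v, x i⟫) := by
    intro i hi
    rw [hPdef, Finset.mem_filter] at hi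
    have habs := abs_le.mp hi.2
    have h1 : y i * ⟪w, x i⟫ ≤ τ := by linarith [habs.2]
    have h2 : y i * ⟪v, x i⟫ ≤ 1/2 := by
      rw [hvw i]
      have hm1 : ‖v‖ * (y i * ⟪w, x i⟫) ≤ ‖v‖ * τ :=
        mul_le_mul_of_nonneg_left h1 (norm_nonneg v)
      have hm2 : ‖v‖ * τ ≤ (1/γ) * τ := mul_le_mul_of_nonneg_right hvnorm hτ0.le
      have hm3 : (1/γ) * τ ≤ (1/γ) * (γ/2) :=
        mul_le_mul_of_nonneg_left hτ (by positivity)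
      have hm4 : (1/γ) * (γ/2) = 1/2 := by field_simp
      linarith
    have : (1:ℝ)/2 ≤ 1 - y i * ⟪v, x i⟫ := by linarith
    exact this.trans (le_max_right _ _)
  -- Step C: clean points have zero hinge loss at u
  have hC : ∀ i ∈ SC, max 0 (1 - y i * ⟪u, x i⟫) = 0 := by
    intro i hi
    have e : ⟪u, x i⟫ = γ⁻¹ * ⟪wstar, x i⟫ := by
      rw [hu]; exact real_inner_smul_left _ _ _
    have h1 : (1:ℝ) ≤ y i * ⟪u, x i⟫ := by
      rw [e]
      have hm := hmargin i hi
      have h3 : γ⁻¹ * γ = 1 := inv_mul_cancel₀ hγ.ne'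
      nlinarith [inv_pos.mpr hγ]
    exact max_eq_left (by linarith)
  -- sum splitting
  have hsplit : ∀ f : Fin n → ℝ, ∑ i, f i = ∑ i ∈ SC, f i + ∑ i ∈ SD, f i := by
    intro f; rw [← Finset.sum_union hdisj, hpart]
  rw [hsplit, hsplit] at key
  have hSCu : ∑ i ∈ SC, q i * max 0 (1 - y i * ⟪u, x i⟫) = 0 :=
    Finset.sum_eq_zero fun i hi => by rw [hC i hi, mul_zero]
  rw [hSCu, zero_add] at key
  -- Lipschitz bound on dirty points
  set z : EuclideanSpace ℝ (Fin d) := u - v with hz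
  have hlip : ∀ i ∈ SD,
      q i * max 0 (1 - y i * ⟪u, x i⟫) - q i * max 0 (1 - y i * ⟪v, x i⟫)
        ≤ q i * |⟪z, x i⟫| := by
    intro i _
    have hyi : |y i| = 1 := by rcases hy i with h | h <;> simp [h]
    have hdiff : |y i * ⟪v, x i⟫ - y i * ⟪u, x i⟫| = |⟪z, x i⟫| := by
      have e : y i * ⟪v, x i⟫ - y i * ⟪u, x i⟫ = -(y i * ⟪z, x i⟫) := by
        rw [hz, inner_sub_left]; ring
      rw [e, abs_neg, abs_mul, hyi, one_mul]
    have hmaxle : max 0 (1 - y i * ⟪u, x i⟫) - max 0 (1 - y i * ⟪v, x i⟫)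
        ≤ |⟪z, x i⟫| := by
      have h1 : (0:ℝ) ≤ max 0 (1 - y i * ⟪v, x i⟫) + |⟪z, x i⟫| := by positivity
      have h2 : 1 - y i * ⟪u, x i⟫
          ≤ max 0 (1 - y i * ⟪v, x i⟫) + |⟪z, x i⟫| := by
        have h3 := le_max_right (0:ℝ) (1 - y i * ⟪v, x i⟫)
        have h4 := le_abs_self (y i * ⟪v, x i⟫ - y i * ⟪u, x i⟫)
        rw [hdiff] at h4
        linarith
      linarith [max_le h1 h2]
    have hq0 := (hq i).1
    nlinarith
  have hkey2 : ∑ i ∈ SC, q i * max 0 (1 - y i * ⟪v, x i⟫)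
      ≤ ∑ i ∈ SD, q i * |⟪z, x i⟫| := by
    have hs := Finset.sum_le_sum hlip
    rw [Finset.sum_sub_distrib] at hs
    linarith
  -- Step F: bound the dirty sum by the sup norm
  obtain ⟨bb, hbb⟩ : ∃ bb : Fin n → Set.Icc (-1:ℝ) 1,
      ∑ i ∈ SD, q i * |⟪z, x i⟫| = ⟪z, ∑ i ∈ SD, ((bb i : ℝ) * q i) • x i⟫ := by
    refine ⟨fun i => if 0 ≤ ⟪z, x i⟫ then ⟨1, by norm_num⟩ else ⟨-1, by norm_num⟩, ?_⟩
    rw [inner_sum]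
    refine Finset.sum_congr rfl fun i _ => ?_
    rw [real_inner_smul_right]
    beta_reduce
    by_cases hzi : 0 ≤ ⟪z, x i⟫
    · rw [if_pos hzi, abs_of_nonneg hzi]
      show q i * ⟪z, x i⟫ = ((1:ℝ) * q i) * ⟪z, x i⟫
      ring
    · rw [if_neg hzi, abs_of_neg (not_le.mp hzi)]
      show q i * -⟪z, x i⟫ = ((-1:ℝ) * q i) * ⟪z, x i⟫
      ring
  have hbdd : BddAbove (Set.range fun b : Fin n → Set.Icc (-1:ℝ) 1 =>
      ‖∑ i ∈ SD, ((b i : ℝ) * q i) • x i‖) := by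
    refine ⟨∑ i ∈ SD, ‖x i‖, ?_⟩
    rintro r ⟨b', rfl⟩
    calc ‖∑ i ∈ SD, ((b' i : ℝ) * q i) • x i‖
        ≤ ∑ i ∈ SD, ‖((b' i : ℝ) * q i) • x i‖ := norm_sum_le _ _
      _ ≤ ∑ i ∈ SD, ‖x i‖ := by
          refine Finset.sum_le_sum fun i _ => ?_
          rw [norm_smul, Real.norm_eq_abs, abs_mul]
          have h1 : |(b' i : ℝ)| ≤ 1 := abs_le.mpr ⟨(b' i).2.1, (b' i).2.2⟩
          have h2 : |q i| ≤ 1 := abs_le.mpr ⟨by linarith [(hq i).1], (hq i).2⟩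
          have h3 : |(b' i : ℝ)| * |q i| ≤ 1 := by
            nlinarith [abs_nonneg ((b' i : ℝ)), abs_nonneg (q i)]
          have h4 := mul_le_mul_of_nonneg_right h3 (norm_nonneg (x i))
          linarith
  have hMb : ‖∑ i ∈ SD, ((bb i : ℝ) * q i) • x i‖
      ≤ ⨆ (b : Fin n → Set.Icc (-1 : ℝ) 1), ‖∑ i ∈ SD, ((b i : ℝ) * q i) • x i‖ :=
    le_ciSup hbdd bb
  have hM0 : 0 ≤ ⨆ (b : Fin n → Set.Icc (-1 : ℝ) 1), ‖∑ i ∈ SD, ((b i : ℝ) * q i) • x i‖ :=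
    le_trans (norm_nonneg _) hMb
  have hznorm : ‖z‖ ≤ 2 / γ := by
    calc ‖z‖ ≤ ‖u‖ + ‖v‖ := norm_sub_le u v
      _ ≤ 1/γ + 1/γ := by rw [hunorm]; linarith
      _ = 2/γ := by ring
  have hdirty : ∑ i ∈ SD, q i * |⟪z, x i⟫|
      ≤ (2/γ) * ⨆ (b : Fin n → Set.Icc (-1 : ℝ) 1), ‖∑ i ∈ SD, ((b i : ℝ) * q i) • x i‖ := by
    rw [hbb]
    calc ⟪z, ∑ i ∈ SD, ((bb i : ℝ) * q i) • x i⟫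
        ≤ ‖z‖ * ‖∑ i ∈ SD, ((bb i : ℝ) * q i) • x i‖ := real_inner_le_norm _ _
      _ ≤ (2/γ) * ⨆ (b : Fin n → Set.Icc (-1 : ℝ) 1), ‖∑ i ∈ SD, ((b i : ℝ) * q i) • x i‖ :=
          mul_le_mul hznorm hMb (norm_nonneg _) (by positivity)
  -- lower bound on the clean sum
  have hclean : (1/2) * ∑ i ∈ P, q i
      ≤ ∑ i ∈ SC, q i * max 0 (1 - y i * ⟪v, x i⟫) := by
    have hPsub : P ⊆ SC := Finset.filter_subset _ _
    calc (1/2) * ∑ i ∈ P, q i = ∑ i ∈ P, q i * (1/2) := by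
          rw [Finset.mul_sum]; exact Finset.sum_congr rfl fun i _ => by ring
      _ ≤ ∑ i ∈ P, q i * max 0 (1 - y i * ⟪v, x i⟫) :=
          Finset.sum_le_sum fun i hi => mul_le_mul_of_nonneg_left (hA i hi) (hq i).1
      _ ≤ ∑ i ∈ SC, q i * max 0 (1 - y i * ⟪v, x i⟫) :=
          Finset.sum_le_sum_of_subset_of_nonneg hPsub fun i _ _ =>
            mul_nonneg (hq i).1 (le_max_left _ _)
  -- combine everything
  have h2γ : (0:ℝ) < 2/γ := by positivity
  have hlt : (2/γ) * (⨆ (b : Fin n → Set.Icc (-1 : ℝ) 1), ‖∑ i ∈ SD, ((b i : ℝ) * q i) • x i‖)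
      < (2/γ) * ((γ/4) * ∑ i ∈ P, q i) := mul_lt_mul_of_pos_left hgrad h2γ
  have heq : (2/γ) * ((γ/4) * ∑ i ∈ P, q i) = (1/2) * ∑ i ∈ P, q i := by
    field_simp; ring
  have hfinal : (1/2) * ∑ i ∈ P, q i < (1/2) * ∑ i ∈ P, q i := by
    calc (1/2) * ∑ i ∈ P, q i
        ≤ ∑ i ∈ SC, q i * max 0 (1 - y i * ⟪v, x i⟫) := hclean
      _ ≤ ∑ i ∈ SD, q i * |⟪z, x i⟫| := hkey2
      _ ≤ (2/γ) * ⨆ (b : Fin n → Set.Icc (-1 : ℝ) 1), ‖∑ i ∈ SD, ((b i : ℝ) * q i) • x i‖ :=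
          hdirty
      _ < (2/γ) * ((γ/4) * ∑ i ∈ P, q i) := hlt
      _ = (1/2) * ∑ i ∈ P, q i := heq
  exact lt_irrefl _ hfinal
end

section
/- Let ŵ and w* be unit vectors in ℝ^d with α := ŵ·w* ∈ (0, 1), and let w' := (w* − α ŵ)/‖w* − α ŵ‖₂. Let γ > 0 and let (x, y) ∈ ℝ^d × {-1, 1} satisfy y (w*·x) ≥ γ and y (ŵ·x) ≤ γ/2. Then y (w'·x) ≥ (√3/2) γ. -/
open scoped RealInnerProductSpace

/-- for unit vectors `ŵ, w*` with `α = ŵ · w* ∈ (0,1)` and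
`w' = (w* − α ŵ)/‖w* − α ŵ‖`, any labeled sample with `y (w* · x) ≥ γ` and `y (ŵ · x) ≤ γ/2`
satisfies `y (w' · x) ≥ (√3/2) γ`. -/
theorem stmt_12 {d : ℕ} (w' what wstar : EuclideanSpace ℝ (Fin d))
    (hwhat : ‖what‖ = 1) (hwstar : ‖wstar‖ = 1)
    (hα : ⟪what, wstar⟫ ∈ Set.Ioo (0 : ℝ) 1)
    (hw' : w' = ‖wstar - ⟪what, wstar⟫ • what‖⁻¹ • (wstar - ⟪what, wstar⟫ • what))
    (γ : ℝ) (hγ : 0 < γ)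
    (x : EuclideanSpace ℝ (Fin d)) (y : ℝ) (hy : y = 1 ∨ y = -1)
    (hmargin : γ ≤ y * ⟪wstar, x⟫) (hsmall : y * ⟪what, x⟫ ≤ γ / 2) :
    Real.sqrt 3 / 2 * γ ≤ y * ⟪w', x⟫ := by
  obtain ⟨hα0, hα1⟩ := hα
  set α : ℝ := ⟪what, wstar⟫ with hαdef
  have hsq : ‖wstar - α • what‖ ^ 2 = 1 - α ^ 2 := by
    rw [← real_inner_self_eq_norm_sq]
    simp only [inner_sub_left, inner_sub_right, inner_smul_left, inner_smul_right,
      real_inner_self_eq_norm_sq, hwhat, hwstar, real_inner_comm what wstar, ← hαdef]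
    ring
  have hspos : (0:ℝ) < ‖wstar - α • what‖ := by
    have : (0:ℝ) < 1 - α ^ 2 := by nlinarith
    nlinarith [norm_nonneg (wstar - α • what)]
  set s : ℝ := ‖wstar - α • what‖
  have hinner : ⟪w', x⟫ = s⁻¹ * (⟪wstar, x⟫ - α * ⟪what, x⟫) := by
    rw [hw']
    simp [inner_smul_left, inner_sub_left]
  have hy2 : y ^ 2 = 1 := by rcases hy with h | h <;> simp [h]
  have key : γ * (1 - α / 2) ≤ y * (⟪wstar, x⟫ - α * ⟪what, x⟫) := by
    have h1 : α * (y * ⟪what, x⟫) ≤ α * (γ / 2) :=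
      mul_le_mul_of_nonneg_left hsmall (le_of_lt hα0)
    nlinarith
  have hss : Real.sqrt 3 * s ≤ 2 - α := by
    have h1 : 3 * s ^ 2 ≤ (2 - α) ^ 2 := by nlinarith [sq_nonneg (2 * α - 1)]
    have h2 : Real.sqrt (3 * s ^ 2) ≤ Real.sqrt ((2 - α) ^ 2) := Real.sqrt_le_sqrt h1
    rwa [Real.sqrt_mul (by norm_num), Real.sqrt_sq hspos.le,
      Real.sqrt_sq (by linarith)] at h2
  have hgoal : Real.sqrt 3 / 2 * γ * s ≤ γ * (1 - α / 2) := by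
    have := mul_le_mul_of_nonneg_left hss (le_of_lt (half_pos hγ))
    nlinarith
  rw [hinner,
    show y * (s⁻¹ * (⟪wstar, x⟫ - α * ⟪what, x⟫)) = s⁻¹ * (y * (⟪wstar, x⟫ - α * ⟪what, x⟫)) by ring]
  calc Real.sqrt 3 / 2 * γ = s⁻¹ * (Real.sqrt 3 / 2 * γ * s) := by field_simp
    _ ≤ s⁻¹ * (y * (⟪wstar, x⟫ - α * ⟪what, x⟫)) := by
        apply mul_le_mul_of_nonneg_left (le_trans hgoal key) (inv_nonneg.mpr hspos.le)
end

section
/- Let ŵ and w* be unit vectors in ℝ^d with α := ŵ·w* ∈ (0, 1), and let w' := (w* − α ŵ)/‖w* − α ŵ‖₂. Let γ > 0 and let (x, y) ∈ ℝ^d × {-1, 1} satisfy y (w*·x) ≥ γ. If y (w'·x) < 0, then y (ŵ·x) > γ. -/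
open scoped RealInnerProductSpace

/-- for unit vectors `ŵ, w*` with `α = ŵ · w* ∈ (0,1)` and
`w' = (w* − α ŵ)/‖w* − α ŵ‖`, any labeled sample with `y (w* · x) ≥ γ` and `y (w' · x) < 0`
satisfies `y (ŵ · x) > γ`. -/
theorem stmt_14 {d : ℕ} (w' what wstar : EuclideanSpace ℝ (Fin d))
    (hwhat : ‖what‖ = 1) (hwstar : ‖wstar‖ = 1)
    (hα : ⟪what, wstar⟫ ∈ Set.Ioo (0 : ℝ) 1)
    (hw' : w' = ‖wstar - ⟪what, wstar⟫ • what‖⁻¹ • (wstar - ⟪what, wstar⟫ • what))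
    (γ : ℝ) (hγ : 0 < γ)
    (x : EuclideanSpace ℝ (Fin d)) (y : ℝ) (hy : y = 1 ∨ y = -1)
    (hmargin : γ ≤ y * ⟪wstar, x⟫) (hneg : y * ⟪w', x⟫ < 0) :
    γ < y * ⟪what, x⟫ := by
  obtain ⟨hα0, hα1⟩ := hα
  set α := ⟪what, wstar⟫ with hαdef
  set v := wstar - α • what with hv
  have hvne : v ≠ 0 := by
    intro h
    have : wstar = α • what := by
      have := sub_eq_zero.mp h
      simpa [hv] using this
    have h1 : ‖wstar‖ = |α| := by rw [this, norm_smul, hwhat]; simp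
    rw [hwstar, abs_of_pos hα0] at h1
    linarith [h1.symm ▸ hα1]
  have hβ : (0:ℝ) < ‖v‖ := norm_pos_iff.mpr hvne
  have hinner : ⟪w', x⟫ = ‖v‖⁻¹ * (⟪wstar, x⟫ - α * ⟪what, x⟫) := by
    rw [hw', real_inner_smul_left, inner_sub_left, real_inner_smul_left]
  have hvneg : y * (⟪wstar, x⟫ - α * ⟪what, x⟫) < 0 := by
    have h1 : y * ⟪w', x⟫ = ‖v‖⁻¹ * (y * (⟪wstar, x⟫ - α * ⟪what, x⟫)) := by
      rw [hinner]; ring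
    nlinarith [inv_pos.mpr hβ]
  nlinarith
end
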